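/- arXiv:2205.04283 — 5 statements merged into one kernel-verified Lean document; each statement's English description precedes it below -/
import Mathlib

section
/- Let (S, 𝒮, μ) be a measure space. For any f, g ∈ L¹(μ) and any sequence t_n ↓ 0, the one-sided directional derivative of the L¹ norm satisfies: lim_{n→∞} (‖f + t_n g‖_{L¹(μ)} − ‖f‖_{L¹(μ)})/t_n = ∫ sign(f) · g dμ + ∫_{{f = 0}} |g| dμ, where sign(t) = 1 if t > 0, 0 if t = 0, and −1 if t < 0. -/
/-!
For real `a`, `b` and `s > 0`, the quotient `(|a + s b| - |a|) / s` is bounded by `|b|`, and for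
small `s` it equals `sign a * b` when `a ≠ 0` (then `a + s b` has the sign of `a`) and `|b|` when
`a = 0`. Dominated convergence, with dominating function `|g|`, passes this pointwise right
derivative of `|·|` under the integral.
-/

open Filter Topology MeasureTheory

namespace Real

theorem measurable_sign : Measurable Real.sign :=
  Measurable.ite measurableSet_Iio measurable_const
    (Measurable.ite measurableSet_Ioi measurable_const measurable_const)

theorem abs_abs_add_mul_sub_abs_div_le (a b : ℝ) {s : ℝ} (hs : 0 < s) :
    |(|a + s * b| - |a|) / s| ≤ |b| := by
  rw [abs_div, abs_of_pos hs, div_le_iff₀ hs]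
  calc |(|a + s * b| - |a|)| ≤ |a + s * b - a| := abs_abs_sub_abs_le_abs_sub _ _
    _ = |b| * s := by rw [add_sub_cancel_left, abs_mul, abs_of_pos hs, mul_comm]

theorem tendsto_abs_add_mul_sub_abs_div (a b : ℝ) :
    Tendsto (fun s => (|a + s * b| - |a|) / s) (𝓝[>] 0)
      (𝓝 (sign a * b + if a = 0 then |b| else 0)) := by
  refine tendsto_const_nhds.congr' ?_
  have hline : Tendsto (fun s => a + s * b) (𝓝[>] 0) (𝓝 a) :=
    ((continuous_const.add (continuous_id.mul continuous_const)).tendsto' 0 a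
      (by simp)).mono_left nhdsWithin_le_nhds
  rcases lt_trichotomy a 0 with ha | rfl | ha
  · filter_upwards [self_mem_nhdsWithin, hline.eventually (gt_mem_nhds ha)]
      with s (hs : 0 < s) hneg
    rw [abs_of_neg hneg, abs_of_neg ha, sign_of_neg ha, if_neg ha.ne]
    field_simp [hs.ne']
    ring
  · filter_upwards [self_mem_nhdsWithin] with s (hs : 0 < s)
    rw [sign_zero, if_pos rfl, zero_add, abs_zero, sub_zero, abs_mul, abs_of_pos hs, zero_mul,
      zero_add, mul_div_cancel_left₀ _ hs.ne']
  · filter_upwards [self_mem_nhdsWithin, hline.eventually (lt_mem_nhds ha)]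
      with s (hs : 0 < s) hpos
    rw [abs_of_pos hpos, abs_of_pos ha, sign_of_pos ha, if_neg ha.ne', add_sub_cancel_left,
      one_mul, add_zero, mul_div_cancel_left₀ _ hs.ne']

end Real

namespace MeasureTheory

variable {S : Type*} [MeasurableSpace S] {μ : Measure S} {f g : S → ℝ}

theorem Integrable.sign_mul (hg : Integrable g μ) (hf : AEMeasurable f μ) :
    Integrable (fun x => Real.sign (f x) * g x) μ := by
  refine hg.bdd_mul (c := 1) (Real.measurable_sign.comp_aemeasurable hf).aestronglyMeasurable
    (ae_of_all _ fun x => ?_)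
  rcases Real.sign_apply_eq (f x) with h | h | h <;> simp [h]

theorem integral_sign_mul_add_ite_abs (hf : AEMeasurable f μ) (hg : Integrable g μ) :
    ∫ x, (Real.sign (f x) * g x + if f x = 0 then |g x| else 0) ∂μ
      = (∫ x, Real.sign (f x) * g x ∂μ) + ∫ x in {x | f x = 0}, |g x| ∂μ := by
  have hzero : NullMeasurableSet {x | f x = 0} μ :=
    hf.nullMeasurable (measurableSet_singleton 0)
  rw [← integral_indicator₀ hzero,
    ← integral_add (hg.sign_mul hf) (hg.abs.indicator₀ hzero)]
  simp only [Set.indicator_apply, Set.mem_ofPred_eq]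

theorem tendsto_integral_abs_add_mul_sub_div (hf : Integrable f μ) (hg : Integrable g μ) :
    Tendsto (fun s => ((∫ x, |f x + s * g x| ∂μ) - ∫ x, |f x| ∂μ) / s) (𝓝[>] 0)
      (𝓝 ((∫ x, Real.sign (f x) * g x ∂μ) + ∫ x in {x | f x = 0}, |g x| ∂μ)) := by
  have hquot : ∀ s, ((∫ x, |f x + s * g x| ∂μ) - ∫ x, |f x| ∂μ) / s
      = ∫ x, (|f x + s * g x| - |f x|) / s ∂μ := fun s => by
    have hshift : Integrable (fun x => |f x + s * g x|) μ := (hf.add (hg.const_mul s)).abs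
    rw [integral_div, integral_sub hshift hf.abs]
  simp only [hquot, ← integral_sign_mul_add_ite_abs hf.aemeasurable hg]
  refine tendsto_integral_filter_of_dominated_convergence (fun x => |g x|)
    (.of_forall fun s => ((hf.add (hg.const_mul s)).abs.sub hf.abs).div_const s |>.1) ?_ hg.abs
    (ae_of_all _ fun x => Real.tendsto_abs_add_mul_sub_abs_div (f x) (g x))
  filter_upwards [self_mem_nhdsWithin] with s hs
  exact ae_of_all _ fun x => Real.abs_abs_add_mul_sub_abs_div_le (f x) (g x) hs

end MeasureTheory

/-- One-sided directional derivative of the L¹ norm: for integrable f, g and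
a sequence tₙ ↓ 0,  (‖f + tₙ g‖₁ − ‖f‖₁)/tₙ → ∫ sign(f)·g dμ + ∫_{f=0} |g| dμ. -/
theorem stmt1 {S : Type*} [MeasurableSpace S] (μ : Measure S)
    (f g : S → ℝ) (hf : Integrable f μ) (hg : Integrable g μ)
    (t : ℕ → ℝ) (ht : ∀ n, 0 < t n) (ht0 : Tendsto t atTop (𝓝 0)) :
    Tendsto (fun n => ((∫ x, |f x + t n * g x| ∂μ) - ∫ x, |f x| ∂μ) / t n) atTop
      (𝓝 ((∫ x, Real.sign (f x) * g x ∂μ) + ∫ x in {x | f x = 0}, |g x| ∂μ)) :=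
  (tendsto_integral_abs_add_mul_sub_div hf hg).comp
    (tendsto_nhdsWithin_iff.2 ⟨ht0, .of_forall ht⟩)
end

section
/- Let 1 < p < ∞ and let μ₀, μ₁, ν be Borel probability measures on ℝ^d supported in B(0,M) for some M > 0. Then |W_p^p(μ₁, ν) − W_p^p(μ₀, ν)| ≤ C_{p,M} · W₁(μ₀, μ₁), where C_{p,M} = p·2^{p−1}·M^{p−1} and W₁ is the 1-Wasserstein distance. -/
open MeasureTheory Metric

variable {d : ℕ}

/-- The p-th power of the p-Wasserstein distance, as infimum of transport cost over couplings. -/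
noncomputable def Wpp {E : Type*} [NormedAddCommGroup E] [MeasurableSpace E]
    (p : ℝ) (μ ν : Measure E) : ℝ :=
  sInf {r | ∃ π : Measure (E × E),
    π.map Prod.fst = μ ∧ π.map Prod.snd = ν ∧ r = ∫ z, ‖z.1 - z.2‖ ^ p ∂π}

/-!
Let `γ` couple `μ₀` with `ν` and `σ` couple `μ₀` with `μ₁`. Disintegrating `γ` along its first
marginal and gluing the resulting kernel to `σ` gives a random triple `(x₀, x₁, y)` with
`(x₀, x₁) ∼ σ` and `(x₀, y) ∼ γ`, so that `(x₁, y)` couples `μ₁` with `ν`. On `B(0, M)` the mean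
value theorem for `t ↦ t ^ p` on `[0, 2M]` gives
`‖x₁ - y‖ ^ p ≤ ‖x₀ - y‖ ^ p + p (2M) ^ (p - 1) ‖x₀ - x₁‖`; integrating and taking the infimum
over `γ` and `σ` bounds `W_p^p(μ₁, ν) - W_p^p(μ₀, ν)` by `p (2M) ^ (p - 1) W₁(μ₀, μ₁)`, and the
roles of `μ₀` and `μ₁` can be exchanged.
-/

open Set Pointwise ProbabilityTheory

theorem le_csInf_add_mul_csInf {S T : Set ℝ} (hS : S.Nonempty) (hT : T.Nonempty) {C x : ℝ}
    (hC : 0 ≤ C) (h : ∀ a ∈ S, ∀ b ∈ T, x ≤ a + C * b) : x ≤ sInf S + C * sInf T := by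
  have hST : ∀ y ∈ C • T, x - sInf S ≤ y := by
    rintro _ ⟨b, hb, rfl⟩
    have := le_csInf hS fun a ha => show x - C * b ≤ a by linarith [h a ha b hb]
    change x - sInf S ≤ C * b
    linarith
  have := le_csInf (hT.smul_set (a := C)) hST
  rw [Real.sInf_smul_of_nonneg hC, smul_eq_mul] at this
  linarith

theorem Real.rpow_le_rpow_add_mul_abs_sub {p R a b : ℝ} (hp : 1 ≤ p) (ha : a ∈ Icc 0 R)
    (hb : b ∈ Icc 0 R) : a ^ p ≤ b ^ p + p * R ^ (p - 1) * |a - b| := by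
  rcases le_total a b with hab | hba
  · have : a ^ p ≤ b ^ p := Real.rpow_le_rpow ha.1 hab (by linarith)
    have : 0 ≤ p * R ^ (p - 1) * |a - b| := by have := ha.1.trans ha.2; positivity
    linarith
  · have hderiv : ∀ x ∈ Ico b a, ‖p * x ^ (p - 1)‖ ≤ p * R ^ (p - 1) := fun x hx => by
      have hx0 : 0 ≤ x := hb.1.trans hx.1
      rw [Real.norm_of_nonneg (by positivity)]
      gcongr
      exact hx.2.le.trans ha.2
    have := norm_image_sub_le_of_norm_deriv_le_segment' (f := fun x : ℝ => x ^ p)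
      (fun x _ => (Real.hasDerivAt_rpow_const (Or.inr hp)).hasDerivWithinAt) hderiv
      a (right_mem_Icc.mpr hba)
    rw [Real.norm_eq_abs] at this
    rw [abs_of_nonneg (sub_nonneg.mpr hba)]
    linarith [le_abs_self (a ^ p - b ^ p)]

theorem MeasureTheory.Measure.exists_glue {α β δ : Type*} [MeasurableSpace α] [MeasurableSpace β]
    [MeasurableSpace δ] [StandardBorelSpace β] [Nonempty β] (γ : Measure (α × β))
    [IsFiniteMeasure γ] (σ : Measure (α × δ)) [SFinite σ] (h : σ.map Prod.fst = γ.map Prod.fst) :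
    ∃ τ : Measure ((α × δ) × β),
      τ.map Prod.fst = σ ∧ τ.map (fun q => (q.1.1, q.2)) = γ := by
  let κ : Kernel (α × δ) β := γ.condKernel.comap Prod.fst measurable_fst
  have hg : Measurable fun q : (α × δ) × β => (q.1.1, q.2) :=
    measurable_fst.fst.prodMk measurable_snd
  refine ⟨σ ⊗ₘ κ, Measure.fst_compProd σ κ, ?_⟩
  ext s hs
  rw [Measure.map_apply hg hs, Measure.compProd_apply (hg hs),
    ← Measure.disintegrate γ γ.condKernel, Measure.compProd_apply hs, Measure.fst, ← h,
    lintegral_map (Kernel.measurable_kernel_prodMk_left hs) measurable_fst]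
  rfl

theorem isFiniteMeasure_of_map_eq {α β : Type*} [MeasurableSpace α] [MeasurableSpace β]
    {π : Measure α} {f : α → β} (hf : Measurable f) {μ : Measure β} [IsFiniteMeasure μ]
    (h : π.map f = μ) : IsFiniteMeasure π :=
  have : IsFiniteMeasure (π.map f) := h ▸ ‹_›
  Measure.isFiniteMeasure_of_map hf.aemeasurable

theorem norm_sub_rpow_le_add {E : Type*} [SeminormedAddCommGroup E] {p M : ℝ} (hp : 1 ≤ p)
    {x₀ x₁ y : E} (h₀ : ‖x₀‖ ≤ M) (h₁ : ‖x₁‖ ≤ M) (hy : ‖y‖ ≤ M) :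
    ‖x₁ - y‖ ^ p ≤ ‖x₀ - y‖ ^ p + p * (2 * M) ^ (p - 1) * ‖x₀ - x₁‖ := by
  have hM : 0 ≤ M := (norm_nonneg _).trans hy
  have hclose : |‖x₁ - y‖ - ‖x₀ - y‖| ≤ ‖x₀ - x₁‖ := by
    simpa [norm_sub_rev x₁ x₀] using abs_norm_sub_norm_le (x₁ - y) (x₀ - y)
  calc ‖x₁ - y‖ ^ p
      ≤ ‖x₀ - y‖ ^ p + p * (2 * M) ^ (p - 1) * |‖x₁ - y‖ - ‖x₀ - y‖| :=
        Real.rpow_le_rpow_add_mul_abs_sub hp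
          ⟨norm_nonneg _, (norm_sub_le _ _).trans (by linarith)⟩
          ⟨norm_nonneg _, (norm_sub_le _ _).trans (by linarith)⟩
    _ ≤ ‖x₀ - y‖ ^ p + p * (2 * M) ^ (p - 1) * ‖x₀ - x₁‖ := by gcongr

section Transport

variable {E : Type*} [NormedAddCommGroup E] [MeasurableSpace E]

def transportCosts (p : ℝ) (μ ν : Measure E) : Set ℝ :=
  {r | ∃ π : Measure (E × E),
    π.map Prod.fst = μ ∧ π.map Prod.snd = ν ∧ r = ∫ z, ‖z.1 - z.2‖ ^ p ∂π}

theorem transportCosts_nonempty (p : ℝ) (μ ν : Measure E) [IsProbabilityMeasure μ]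
    [IsProbabilityMeasure ν] : (transportCosts p μ ν).Nonempty :=
  ⟨_, μ.prod ν, by simp, by simp, rfl⟩

theorem transportCosts_bddBelow (p : ℝ) (μ ν : Measure E) : BddBelow (transportCosts p μ ν) :=
  ⟨0, by rintro _ ⟨π, -, -, rfl⟩; exact integral_nonneg fun z => by positivity⟩

theorem transportCosts_comm (p : ℝ) (μ ν : Measure E) :
    transportCosts p μ ν = transportCosts p ν μ := by
  have key : ∀ μ ν : Measure E, transportCosts p μ ν ⊆ transportCosts p ν μ := by
    rintro μ ν _ ⟨π, hπ₁, hπ₂, rfl⟩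
    refine ⟨π.map Prod.swap, ?_, ?_, ?_⟩
    · rwa [Measure.map_map measurable_fst measurable_swap]
    · rwa [Measure.map_map measurable_snd measurable_swap]
    · rw [show (Prod.swap : E × E → E × E) = MeasurableEquiv.prodComm from rfl,
        integral_map_equiv]
      simp [MeasurableEquiv.prodComm, norm_sub_rev]
  exact (key μ ν).antisymm (key ν μ)

theorem Wpp_comm (p : ℝ) (μ ν : Measure E) : Wpp p μ ν = Wpp p ν μ :=
  congrArg sInf (transportCosts_comm p μ ν)

end Transport

section Gluing

variable {E : Type*} [NormedAddCommGroup E] [MeasurableSpace E] [BorelSpace E]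
  [SecondCountableTopology E] {X : Type*} [MeasurableSpace X] {τ : Measure X}

theorem integrable_norm_sub_rpow [IsFiniteMeasure τ] {p M : ℝ} (hp : 0 ≤ p) {f g : X → E}
    (hf : Measurable f) (hg : Measurable g) (hfM : ∀ᵐ x ∂τ, ‖f x‖ ≤ M)
    (hgM : ∀ᵐ x ∂τ, ‖g x‖ ≤ M) : Integrable (fun x => ‖f x - g x‖ ^ p) τ := by
  refine .of_bound ((hf.sub hg).norm.pow_const p).aestronglyMeasurable ((2 * M) ^ p) ?_
  filter_upwards [hfM, hgM] with x hfx hgx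
  rw [Real.norm_of_nonneg (by positivity)]
  exact Real.rpow_le_rpow (norm_nonneg _) ((norm_sub_le _ _).trans (by linarith)) hp

theorem integral_norm_sub_rpow_le [IsFiniteMeasure τ] {p M : ℝ} (hp : 1 ≤ p) {f₀ f₁ g : X → E}
    (hf₀ : Measurable f₀) (hf₁ : Measurable f₁) (hg : Measurable g)
    (hf₀M : ∀ᵐ x ∂τ, ‖f₀ x‖ ≤ M) (hf₁M : ∀ᵐ x ∂τ, ‖f₁ x‖ ≤ M) (hgM : ∀ᵐ x ∂τ, ‖g x‖ ≤ M) :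
    ∫ x, ‖f₁ x - g x‖ ^ p ∂τ ≤
      ∫ x, ‖f₀ x - g x‖ ^ p ∂τ + p * (2 * M) ^ (p - 1) * ∫ x, ‖f₀ x - f₁ x‖ ∂τ := by
  have hint₀₁ : Integrable (fun x => ‖f₀ x - f₁ x‖) τ := by
    simpa using integrable_norm_sub_rpow zero_le_one hf₀ hf₁ hf₀M hf₁M
  rw [← integral_const_mul, ← integral_add
    (integrable_norm_sub_rpow (by linarith) hf₀ hg hf₀M hgM) (hint₀₁.const_mul _)]
  refine integral_mono_ae (integrable_norm_sub_rpow (by linarith) hf₁ hg hf₁M hgM)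
    ((integrable_norm_sub_rpow (by linarith) hf₀ hg hf₀M hgM).add (hint₀₁.const_mul _)) ?_
  filter_upwards [hf₀M, hf₁M, hgM] with x h₀ h₁ hy
  exact norm_sub_rpow_le_add hp h₀ h₁ hy

theorem integral_norm_sub_rpow_map {f : X → E × E} (hf : Measurable f) (p : ℝ) :
    ∫ z, ‖z.1 - z.2‖ ^ p ∂(τ.map f) = ∫ x, ‖(f x).1 - (f x).2‖ ^ p ∂τ :=
  integral_map hf.aemeasurable
    ((measurable_fst.sub measurable_snd).norm.pow_const p).aestronglyMeasurable

variable [CompleteSpace E]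

theorem Wpp_le_add_of_mem_transportCosts {p M : ℝ} (hp : 1 ≤ p) {μ₀ μ₁ ν : Measure E}
    [IsFiniteMeasure μ₀] (hμ₀ : ∀ᵐ x ∂μ₀, ‖x‖ ≤ M) (hμ₁ : ∀ᵐ x ∂μ₁, ‖x‖ ≤ M)
    (hν : ∀ᵐ x ∂ν, ‖x‖ ≤ M) {a b : ℝ} (ha : a ∈ transportCosts p μ₀ ν)
    (hb : b ∈ transportCosts 1 μ₀ μ₁) : Wpp p μ₁ ν ≤ a + p * (2 * M) ^ (p - 1) * b := by
  obtain ⟨γ, hγ₀, hγν, rfl⟩ := ha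
  obtain ⟨σ, hσ₀, hσ₁, rfl⟩ := hb
  have := isFiniteMeasure_of_map_eq measurable_fst hγ₀
  have := isFiniteMeasure_of_map_eq measurable_fst hσ₀
  obtain ⟨τ, hτσ, hτγ⟩ := Measure.exists_glue γ σ (hσ₀.trans hγ₀.symm)
  have := isFiniteMeasure_of_map_eq measurable_fst hτσ
  have h₀₂ : Measurable fun q : (E × E) × E => (q.1.1, q.2) :=
    measurable_fst.fst.prodMk measurable_snd
  have h₁₂ : Measurable fun q : (E × E) × E => (q.1.2, q.2) :=
    measurable_fst.snd.prodMk measurable_snd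
  have hx₀ : ∀ᵐ q ∂τ, ‖q.1.1‖ ≤ M := ae_of_ae_map measurable_fst.aemeasurable
    (ae_of_ae_map measurable_fst.aemeasurable (hτσ ▸ hσ₀ ▸ hμ₀))
  have hx₁ : ∀ᵐ q ∂τ, ‖q.1.2‖ ≤ M := ae_of_ae_map measurable_fst.aemeasurable
    (ae_of_ae_map measurable_snd.aemeasurable (hτσ ▸ hσ₁ ▸ hμ₁))
  have hy : ∀ᵐ q ∂τ, ‖q.2‖ ≤ M := ae_of_ae_map h₀₂.aemeasurable
    (ae_of_ae_map measurable_snd.aemeasurable (hτγ ▸ hγν ▸ hν))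
  have hπ₁ : (τ.map fun q => (q.1.2, q.2)).map Prod.fst = μ₁ := by
    rw [Measure.map_map measurable_fst h₁₂, ← hσ₁, ← hτσ,
      Measure.map_map measurable_snd measurable_fst]
    rfl
  have hπ₂ : (τ.map fun q => (q.1.2, q.2)).map Prod.snd = ν := by
    rw [Measure.map_map measurable_snd h₁₂, ← hγν, ← hτγ, Measure.map_map measurable_snd h₀₂]
    rfl
  calc Wpp p μ₁ ν ≤ ∫ z, ‖z.1 - z.2‖ ^ p ∂(τ.map fun q => (q.1.2, q.2)) :=
        csInf_le (transportCosts_bddBelow p μ₁ ν) ⟨_, hπ₁, hπ₂, rfl⟩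
    _ = ∫ q, ‖q.1.2 - q.2‖ ^ p ∂τ := integral_norm_sub_rpow_map h₁₂ p
    _ ≤ ∫ q, ‖q.1.1 - q.2‖ ^ p ∂τ + p * (2 * M) ^ (p - 1) * ∫ q, ‖q.1.1 - q.1.2‖ ∂τ :=
        integral_norm_sub_rpow_le hp measurable_fst.fst measurable_fst.snd measurable_snd
          hx₀ hx₁ hy
    _ = ∫ z, ‖z.1 - z.2‖ ^ p ∂γ + p * (2 * M) ^ (p - 1) * ∫ z, ‖z.1 - z.2‖ ^ (1 : ℝ) ∂σ := by
        rw [← hτγ, ← hτσ, integral_norm_sub_rpow_map h₀₂,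
          integral_norm_sub_rpow_map measurable_fst]
        simp

end Gluing

theorem nonneg_of_ae_norm_le {E : Type*} [NormedAddCommGroup E] [MeasurableSpace E]
    {μ : Measure E} [NeZero μ] {M : ℝ} (h : ∀ᵐ x ∂μ, ‖x‖ ≤ M) : 0 ≤ M :=
  let ⟨x, hx⟩ := h.exists
  (norm_nonneg x).trans hx

theorem Wpp_le_add_mul_Wpp_one {E : Type*} [NormedAddCommGroup E] [MeasurableSpace E]
    [BorelSpace E] [SecondCountableTopology E] [CompleteSpace E] {p M : ℝ} (hp : 1 ≤ p)
    {μ₀ μ₁ ν : Measure E} [IsProbabilityMeasure μ₀] [IsProbabilityMeasure μ₁]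
    [IsProbabilityMeasure ν] (hμ₀ : ∀ᵐ x ∂μ₀, ‖x‖ ≤ M) (hμ₁ : ∀ᵐ x ∂μ₁, ‖x‖ ≤ M)
    (hν : ∀ᵐ x ∂ν, ‖x‖ ≤ M) :
    Wpp p μ₁ ν ≤ Wpp p μ₀ ν + p * (2 * M) ^ (p - 1) * Wpp 1 μ₀ μ₁ := by
  have hM := nonneg_of_ae_norm_le hμ₀
  exact le_csInf_add_mul_csInf (transportCosts_nonempty _ _ _) (transportCosts_nonempty _ _ _)
    (by positivity) fun a ha b hb => Wpp_le_add_of_mem_transportCosts hp hμ₀ hμ₁ hν ha hb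

theorem stmt3_general (p M : ℝ) (hp : 1 < p)
    (μ₀ μ₁ ν : Measure (EuclideanSpace ℝ (Fin d)))
    [IsProbabilityMeasure μ₀] [IsProbabilityMeasure μ₁] [IsProbabilityMeasure ν]
    (hμ₀ : μ₀ (ball (0 : EuclideanSpace ℝ (Fin d)) M)ᶜ = 0)
    (hμ₁ : μ₁ (ball (0 : EuclideanSpace ℝ (Fin d)) M)ᶜ = 0)
    (hν : ν (ball (0 : EuclideanSpace ℝ (Fin d)) M)ᶜ = 0) :
    |Wpp p μ₁ ν - Wpp p μ₀ ν| ≤ p * 2 ^ (p - 1) * M ^ (p - 1) * Wpp 1 μ₀ μ₁ := by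
  have bounded : ∀ μ : Measure (EuclideanSpace ℝ (Fin d)), μ (ball 0 M)ᶜ = 0 →
      ∀ᵐ x ∂μ, ‖x‖ ≤ M := fun μ h =>
    Filter.mem_of_superset (mem_ae_iff.mpr h) fun _ hx => (mem_ball_zero_iff.mp hx).le
  have hC : p * (2 * M) ^ (p - 1) = p * 2 ^ (p - 1) * M ^ (p - 1) := by
    rw [Real.mul_rpow zero_le_two (nonneg_of_ae_norm_le (bounded μ₀ hμ₀)), mul_assoc]
  have h₀₁ := Wpp_le_add_mul_Wpp_one hp.le (bounded μ₀ hμ₀) (bounded μ₁ hμ₁) (bounded ν hν)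
  have h₁₀ := Wpp_le_add_mul_Wpp_one hp.le (bounded μ₁ hμ₁) (bounded μ₀ hμ₀) (bounded ν hν)
  rw [hC] at h₀₁ h₁₀
  rw [Wpp_comm 1 μ₁] at h₁₀
  exact abs_sub_le_iff.mpr ⟨by linarith, by linarith⟩

/-- For 1 < p < ∞ and μ₀, μ₁, ν supported in B(0,M),
|W_p^p(μ₁,ν) − W_p^p(μ₀,ν)| ≤ p·2^(p−1)·M^(p−1) · W₁(μ₀,μ₁). -/
theorem stmt3 (p M : ℝ) (hp : 1 < p) (hM : 0 < M)
    (μ₀ μ₁ ν : Measure (EuclideanSpace ℝ (Fin d)))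
    [IsProbabilityMeasure μ₀] [IsProbabilityMeasure μ₁] [IsProbabilityMeasure ν]
    (hμ₀ : μ₀ (ball (0 : EuclideanSpace ℝ (Fin d)) M)ᶜ = 0)
    (hμ₁ : μ₁ (ball (0 : EuclideanSpace ℝ (Fin d)) M)ᶜ = 0)
    (hν : ν (ball (0 : EuclideanSpace ℝ (Fin d)) M)ᶜ = 0) :
    |Wpp p μ₁ ν - Wpp p μ₀ ν| ≤ p * 2 ^ (p - 1) * M ^ (p - 1) * Wpp 1 μ₀ μ₁ :=
  stmt3_general p M hp μ₀ μ₁ ν hμ₀ hμ₁ hν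
end

section
/- Let μ be a Borel probability measure supported in a compact set 𝒳 ⊂ ℝ^d, and η_σ a probability measure whose smooth density is supported in the closed ball B̄(0,σ). Then spt(μ∗η_σ) = ∪_{x ∈ spt(μ)} B̄(x,σ), the interior of spt(μ∗η_σ) contains ∪_{x ∈ spt(μ)} B(x,σ), and the boundary of int(spt(μ∗η_σ)) has Lebesgue measure zero. Moreover, if spt(μ) is connected then int(spt(μ∗η_σ)) is connected. -/
open MeasureTheory Metric Set
open scoped ENNReal NNReal Pointwise

noncomputable section

variable {d : ℕ}

/-- The topological support of a Borel measure. -/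
def msupport {X : Type*} [TopologicalSpace X] [MeasurableSpace X] (μ : Measure X) : Set X :=
  {x | ∀ U : Set X, IsOpen U → x ∈ U → 0 < μ U}


lemma isClosed_msupport {X : Type*} [TopologicalSpace X] [MeasurableSpace X] (μ : Measure X) :
    IsClosed (msupport μ) := by
  rw [← isOpen_compl_iff, isOpen_iff_mem_nhds]
  intro x hx
  simp only [msupport, mem_compl_iff, mem_setOf_eq, not_forall] at hx
  obtain ⟨U, hU, hxU, hμU⟩ := hx
  push_neg at hμU
  have hμU0 : μ U = 0 := le_antisymm hμU zero_le
  filter_upwards [hU.mem_nhds hxU] with y hy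
  simp only [msupport, mem_compl_iff, mem_setOf_eq, not_forall]
  exact ⟨U, hU, hy, by simp [hμU0]⟩

lemma measure_compl_msupport {X : Type*} [TopologicalSpace X] [MeasurableSpace X]
    [SecondCountableTopology X] (μ : Measure X) : μ (msupport μ)ᶜ = 0 := by
  have h : ∀ x ∈ (msupport μ)ᶜ, ∃ U : Set X, IsOpen U ∧ x ∈ U ∧ μ U = 0 := by
    intro x hx
    simp only [msupport, mem_compl_iff, mem_setOf_eq, not_forall] at hx
    obtain ⟨U, hU, hxU, hμU⟩ := hx
    push_neg at hμU
    exact ⟨U, hU, hxU, le_antisymm hμU zero_le⟩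
  choose! U hUopen hxU hμU using h
  obtain ⟨T, hTc, hTeq⟩ := TopologicalSpace.isOpen_iUnion_countable
    (fun x : ↥(msupport μ)ᶜ => U x) (fun x => hUopen x x.2)
  have hsub : (msupport μ)ᶜ ⊆ ⋃ i ∈ T, U (i : X) := by
    rw [hTeq]
    intro x hx
    exact mem_iUnion.2 ⟨⟨x, hx⟩, hxU x hx⟩
  refine le_antisymm ?_ zero_le
  calc μ (msupport μ)ᶜ ≤ μ (⋃ i ∈ T, U i) := measure_mono hsub
    _ = 0 := by
      haveI := hTc.to_subtype
      rw [biUnion_eq_iUnion]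
      refine le_antisymm ((measure_iUnion_le _).trans ?_) zero_le
      simp only [nonpos_iff_eq_zero]
      refine ENNReal.tsum_eq_zero.2 fun i => hμU _ (i : ↥(msupport μ)ᶜ).2

lemma withDensity_compl_tsupport {X : Type*} [MeasurableSpace X] [TopologicalSpace X]
    [OpensMeasurableSpace X] (ν : Measure X) (f : X → ℝ) :
    ν.withDensity (fun x => ENNReal.ofReal (f x)) (tsupport f)ᶜ = 0 := by
  rw [withDensity_apply _ (isClosed_tsupport f).measurableSet.compl]
  rw [setLIntegral_congr_fun (isClosed_tsupport f).measurableSet.compl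
    (fun x hx => by
      rw [image_eq_zero_of_notMem_tsupport hx, ENNReal.ofReal_zero])]
  simp

lemma withDensity_open_pos {X : Type*} [MeasurableSpace X] [TopologicalSpace X]
    [OpensMeasurableSpace X] (ν : Measure X) [ν.IsOpenPosMeasure] {f : X → ℝ}
    (hf : Continuous f) (hf0 : ∀ x, 0 ≤ f x) {V : Set X} (hV : IsOpen V) {v : X}
    (hv : v ∈ tsupport f) (hvV : v ∈ V) :
    0 < ν.withDensity (fun x => ENNReal.ofReal (f x)) V := by
  obtain ⟨w, hwV, hwsupp⟩ : (V ∩ Function.support f).Nonempty := by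
    have hv' : v ∈ closure (Function.support f) := hv
    rw [_root_.mem_closure_iff] at hv'
    exact hv' V hV hvV
  have hfw : 0 < f w := lt_of_le_of_ne (hf0 w) (Ne.symm hwsupp)
  set W := V ∩ {x | f w / 2 < f x} with hW
  have hWopen : IsOpen W := hV.inter (isOpen_lt continuous_const hf)
  have hwW : w ∈ W := ⟨hwV, by simp; linarith⟩
  have hWpos : 0 < ν W := hWopen.measure_pos ν ⟨w, hwW⟩
  rw [withDensity_apply _ hV.measurableSet]
  calc (0 : ℝ≥0∞) < ENNReal.ofReal (f w / 2) * ν W := by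
        exact ENNReal.mul_pos (by simp [hfw]) hWpos.ne'
    _ = ∫⁻ _ in W, ENNReal.ofReal (f w / 2) ∂ν := by rw [setLIntegral_const]
    _ ≤ ∫⁻ x in W, ENNReal.ofReal (f x) ∂ν := by
        refine setLIntegral_mono (by fun_prop) fun x hx => ?_
        exact ENNReal.ofReal_le_ofReal hx.2.le
    _ ≤ ∫⁻ x in V, ENNReal.ofReal (f x) ∂ν := lintegral_mono_set inter_subset_left

lemma volume_shell_null {d : ℕ} {K : Set (EuclideanSpace ℝ (Fin d))} {σ : ℝ} (hσ : 0 < σ)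
    (hS : IsClosed (⋃ x ∈ K, closedBall x σ)) :
    volume ((⋃ x ∈ K, closedBall x σ) \ ⋃ x ∈ K, ball x σ) = 0 := by
  set S := ⋃ x ∈ K, closedBall x σ with hSdef
  set U := ⋃ x ∈ K, ball x σ with hUdef
  set T := S \ U with hTdef
  have hTmeas : MeasurableSet T :=
    hS.measurableSet.diff (isOpen_biUnion fun x _ => isOpen_ball).measurableSet
  by_contra hT
  have hne : (ae (volume.restrict T)).NeBot := by
    rw [ae_neBot, Ne, Measure.restrict_eq_zero]
    exact hT
  obtain ⟨y, hyT, htend⟩ :=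
    ((ae_restrict_mem hTmeas).and (Besicovitch.ae_tendsto_measure_inter_div volume T)).exists
  -- find x ∈ K with dist y x = σ
  obtain ⟨x, hxK, hdistle⟩ : ∃ x ∈ K, dist y x ≤ σ := by
    have := hyT.1
    simp only [hSdef, mem_iUnion, mem_closedBall, exists_prop] at this
    exact this
  have hdist : dist y x = σ := by
    refine le_antisymm hdistle ?_
    by_contra h
    push_neg at h
    exact hyT.2 (mem_iUnion₂.2 ⟨x, hxK, mem_ball.2 h⟩)
  haveI : Nontrivial (EuclideanSpace ℝ (Fin d)) := nontrivial_of_ne y x (by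
    intro h; rw [h, dist_self] at hdist; exact hσ.ne' hdist.symm)
  set q : ℝ≥0∞ := ENNReal.ofReal ((2:ℝ)⁻¹ ^ d) with hq
  have hq0 : q ≠ 0 := by
    simp only [hq, Ne, ENNReal.ofReal_eq_zero, not_le]
    positivity
  have hq1 : q ≤ 1 := by
    rw [hq, ← ENNReal.ofReal_one]
    exact ENNReal.ofReal_le_ofReal (pow_le_one₀ (by norm_num) (by norm_num))
  have h1q : (1 : ℝ≥0∞) - q < 1 := ENNReal.sub_lt_self ENNReal.one_ne_top one_ne_zero hq0
  have hev1 : ∀ᶠ r in nhdsWithin (0:ℝ) (Ioi 0),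
      1 - q < volume (T ∩ closedBall y r) / volume (closedBall y r) :=
    htend.eventually_const_lt h1q
  have hev2 : ∀ᶠ r in nhdsWithin (0:ℝ) (Ioi 0), r < σ :=
    eventually_nhdsWithin_of_eventually_nhds (eventually_lt_nhds hσ)
  have hev3 : ∀ᶠ r in nhdsWithin (0:ℝ) (Ioi 0), (0:ℝ) < r := eventually_mem_nhdsWithin
  obtain ⟨r, hratio, hrσ, hr0⟩ := (hev1.and (hev2.and hev3)).exists
  set z : EuclideanSpace ℝ (Fin d) := y + (r / (2*σ)) • (x - y) with hz
  have hxy : ‖x - y‖ = σ := by rw [← dist_eq_norm, dist_comm]; exact hdist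
  have ht0 : 0 < r / (2*σ) := by positivity
  have ht1 : r / (2*σ) < 1 := by
    rw [div_lt_one (by positivity)]; linarith
  have hzy : dist z y = r / 2 := by
    rw [hz, dist_eq_norm]
    simp only [add_sub_cancel_left, norm_smul, Real.norm_eq_abs, abs_of_pos ht0, hxy]
    field_simp
  have hzx : dist z x = σ - r / 2 := by
    rw [hz, dist_eq_norm]
    have : y + (r / (2*σ)) • (x - y) - x = -((1 - r/(2*σ)) • (x - y)) := by
      rw [sub_smul, one_smul]; abel
    rw [this, norm_neg, norm_smul, Real.norm_eq_abs, abs_of_pos (by linarith), hxy]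
    field_simp
  have hball_sub : ball z (r/2) ⊆ closedBall y r \ T := by
    intro w hw
    rw [mem_ball] at hw
    constructor
    · rw [mem_closedBall]
      calc dist w y ≤ dist w z + dist z y := dist_triangle w z y
        _ ≤ r/2 + r/2 := by rw [hzy]; linarith
        _ = r := by ring
    · intro hwT
      apply hwT.2
      refine mem_iUnion₂.2 ⟨x, hxK, mem_ball.2 ?_⟩
      calc dist w x ≤ dist w z + dist z x := dist_triangle w z x
        _ < r/2 + (σ - r/2) := by rw [hzx]; linarith
        _ = σ := by ring
  set B := volume (closedBall y r) with hBdef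
  set A := volume (T ∩ closedBall y r) with hAdef
  set P := volume (ball z (r/2)) with hPdef
  have hB0 : B ≠ 0 := (measure_closedBall_pos volume y hr0).ne'
  have hBtop : B ≠ ⊤ := measure_closedBall_lt_top.ne
  have hPtop : P ≠ ⊤ := measure_ball_lt_top.ne
  have hPB : P = q * B := by
    rw [hPdef, hBdef, Measure.addHaar_ball volume z (by positivity : (0:ℝ) ≤ r/2),
      Measure.addHaar_closedBall volume y hr0.le, finrank_euclideanSpace_fin]
    rw [show (r/2 : ℝ)^d = (2:ℝ)⁻¹^d * r^d by rw [div_eq_mul_inv, mul_comm, mul_pow],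
      ENNReal.ofReal_mul (by positivity), hq, mul_assoc]
  have hAB : (1 - q) * B < A := by
    rw [← ENNReal.lt_div_iff_mul_lt (Or.inl hB0) (Or.inl hBtop)]
    exact hratio
  have hAPB : A + P ≤ B := by
    rw [hAdef, hPdef, ← measure_union ?_ measurableSet_ball]
    · refine measure_mono (union_subset inter_subset_right
        (hball_sub.trans diff_subset))
    · exact Disjoint.mono_left inter_subset_left
        (disjoint_left.2 fun w hwT hwb => (hball_sub hwb).2 hwT)
  have : B < B := by
    calc B = (1 - q) * B + q * B := by
          rw [← add_mul, tsub_add_cancel_of_le hq1, one_mul]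
      _ = (1 - q) * B + P := by rw [hPB]
      _ < A + P := ENNReal.add_lt_add_right hPtop hAB
      _ ≤ B := hAPB
  exact absurd this (lt_irrefl B)

/-- For μ supported in a compact set and η_σ a probability measure with a
smooth density supported on the closed ball B̄(0,σ):
spt(μ∗η_σ) = ⋃_{x ∈ spt μ} B̄(x,σ); the interior of spt(μ∗η_σ) contains ⋃_{x ∈ spt μ} B(x,σ);
the boundary of int(spt(μ∗η_σ)) is Lebesgue-null; and if spt(μ) is connected then so is
int(spt(μ∗η_σ)). -/
theorem stmt10 (𝒳 : Set (EuclideanSpace ℝ (Fin d))) (h𝒳 : IsCompact 𝒳)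
    (μ : Measure (EuclideanSpace ℝ (Fin d))) [IsProbabilityMeasure μ] (hμ : μ 𝒳ᶜ = 0)
    (σ : ℝ) (hσ : 0 < σ) (χσ : EuclideanSpace ℝ (Fin d) → ℝ)
    (hχsmooth : ContDiff ℝ (⊤ : ℕ∞) χσ) (hχpos : ∀ x, 0 ≤ χσ x)
    (hχsupp : tsupport χσ = closedBall (0 : EuclideanSpace ℝ (Fin d)) σ)
    (η : Measure (EuclideanSpace ℝ (Fin d)))
    (hη : η = volume.withDensity (fun x => ENNReal.ofReal (χσ x)))
    [IsProbabilityMeasure η] :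
    msupport (Measure.conv μ η) = ⋃ x ∈ msupport μ, closedBall x σ ∧
    (⋃ x ∈ msupport μ, ball x σ) ⊆ interior (msupport (Measure.conv μ η)) ∧
    volume (frontier (interior (msupport (Measure.conv μ η)))) = 0 ∧
    (IsConnected (msupport μ) → IsConnected (interior (msupport (Measure.conv μ η)))) := by
  set K := msupport μ with hKdef
  have hKcl : IsClosed K := isClosed_msupport μ
  have hKsub : K ⊆ 𝒳 := by
    intro x hx
    by_contra hx𝒳
    have := hx 𝒳ᶜ h𝒳.isClosed.isOpen_compl hx𝒳
    simp [hμ] at this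
  have hKcomp : IsCompact K := h𝒳.of_isClosed_subset hKcl hKsub
  set S := ⋃ x ∈ K, closedBall x σ with hSdef
  have hSadd : S = K + closedBall (0 : EuclideanSpace ℝ (Fin d)) σ := by
    ext y
    simp only [hSdef, mem_iUnion, mem_closedBall, exists_prop, Set.mem_add]
    constructor
    · rintro ⟨x, hx, hd⟩
      exact ⟨x, hx, y - x, by simpa [mem_closedBall, dist_eq_norm, norm_sub_rev] using
        (by rwa [dist_eq_norm, norm_sub_rev] at hd : ‖x - y‖ ≤ σ), by abel⟩
    · rintro ⟨x, hx, b, hb, rfl⟩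
      refine ⟨x, hx, ?_⟩
      rw [dist_eq_norm]
      simpa [dist_eq_norm] using hb
  have hScomp : IsCompact S := by
    rw [hSadd]
    exact hKcomp.add (isCompact_closedBall 0 σ)
  have hScl : IsClosed S := hScomp.isClosed
  set U := ⋃ x ∈ K, ball x σ with hUdef
  have hUopen : IsOpen U := isOpen_biUnion fun x _ => isOpen_ball
  have hUS : U ⊆ S := iUnion₂_mono fun x _ => ball_subset_closedBall
  have hSclosure : S ⊆ closure U := by
    intro y hy
    simp only [hSdef, mem_iUnion, exists_prop] at hy
    obtain ⟨x, hx, hyx⟩ := hy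
    have h1 : y ∈ closure (ball x σ) := by rwa [closure_ball x hσ.ne']
    exact closure_mono (subset_iUnion₂ (s := fun x _ => ball x σ) x hx) h1
  set ρ := Measure.conv μ η with hρdef
  have hmeas_add : Measurable fun p : EuclideanSpace ℝ (Fin d) × EuclideanSpace ℝ (Fin d) =>
      p.1 + p.2 := by fun_prop
  have hρ_apply : ∀ A : Set (EuclideanSpace ℝ (Fin d)), MeasurableSet A →
      ρ A = (μ.prod η) ((fun p : EuclideanSpace ℝ (Fin d) × EuclideanSpace ℝ (Fin d) =>
        p.1 + p.2) ⁻¹' A) := fun A hA => Measure.map_apply hmeas_add hA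
  have hη_cb : η (closedBall (0 : EuclideanSpace ℝ (Fin d)) σ)ᶜ = 0 := by
    rw [hη, ← hχsupp]
    exact withDensity_compl_tsupport volume χσ
  have hμK : μ Kᶜ = 0 := measure_compl_msupport μ
  have hρS : ρ Sᶜ = 0 := by
    rw [hρ_apply _ hScl.measurableSet.compl]
    have hsub : (fun p : EuclideanSpace ℝ (Fin d) × EuclideanSpace ℝ (Fin d) =>
        p.1 + p.2) ⁻¹' Sᶜ ⊆ (Kᶜ ×ˢ univ) ∪ (univ ×ˢ (closedBall 0 σ)ᶜ) := by
      rintro ⟨a, b⟩ hp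
      by_contra h
      simp only [mem_union, mem_prod, mem_compl_iff, mem_univ, and_true, true_and,
        not_or, not_not] at h
      apply hp
      simp only [mem_compl_iff, not_not, mem_preimage]
      refine mem_iUnion₂.2 ⟨a, h.1, ?_⟩
      rw [mem_closedBall, dist_comm, dist_eq_norm]
      simpa [dist_eq_norm] using h.2
    refine le_antisymm ((measure_mono hsub).trans ?_) zero_le
    refine (measure_union_le _ _).trans ?_
    rw [Measure.prod_prod, Measure.prod_prod, hμK, hη_cb]
    simp
  have hsupp_sub : msupport ρ ⊆ S := by
    intro x hx
    by_contra hxS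
    have := hx Sᶜ hScl.isOpen_compl hxS
    simp [hρS] at this
  have hU_supp : U ⊆ msupport ρ := by
    intro w hw V hV hwV
    simp only [hUdef, mem_iUnion, exists_prop] at hw
    obtain ⟨x, hxK, hwx⟩ := hw
    set v := w - x with hv
    have hvσ : ‖v‖ < σ := by
      rw [hv, ← dist_eq_norm]
      exact mem_ball.1 hwx
    obtain ⟨ε, hε, hball⟩ := Metric.isOpen_iff.1 hV w hwV
    have key : ball x (ε/2) ×ˢ ball v (ε/2) ⊆
        (fun p : EuclideanSpace ℝ (Fin d) × EuclideanSpace ℝ (Fin d) => p.1 + p.2) ⁻¹' V := by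
      rintro ⟨a, b⟩ ⟨ha, hb⟩
      apply hball
      rw [mem_ball, dist_eq_norm]
      have : a + b - w = (a - x) + (b - v) := by rw [hv]; abel
      rw [this]
      calc ‖(a - x) + (b - v)‖ ≤ ‖a - x‖ + ‖b - v‖ := norm_add_le _ _
        _ < ε/2 + ε/2 := by
            gcongr
            · rw [← dist_eq_norm]; exact mem_ball.1 ha
            · rw [← dist_eq_norm]; exact mem_ball.1 hb
        _ = ε := by ring
    have hμball : 0 < μ (ball x (ε/2)) :=
      hxK _ isOpen_ball (mem_ball_self (by positivity))
    have hηball : 0 < η (ball v (ε/2)) := by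
      rw [hη]
      refine withDensity_open_pos volume hχsmooth.continuous hχpos isOpen_ball ?_
        (mem_ball_self (by positivity))
      rw [hχsupp, mem_closedBall, dist_zero_right]
      exact hvσ.le
    calc (0:ℝ≥0∞) < μ (ball x (ε/2)) * η (ball v (ε/2)) :=
          ENNReal.mul_pos hμball.ne' hηball.ne'
      _ = (μ.prod η) (ball x (ε/2) ×ˢ ball v (ε/2)) := (Measure.prod_prod _ _).symm
      _ ≤ _ := measure_mono key
      _ = ρ V := (hρ_apply V hV.measurableSet).symm
  have hsupp_eq : msupport ρ = S :=
    subset_antisymm hsupp_sub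
      (hSclosure.trans (closure_minimal hU_supp (isClosed_msupport ρ)))
  have hUint : U ⊆ interior (msupport ρ) :=
    interior_maximal hU_supp hUopen
  have hUint' : U ⊆ interior S := by rw [← hsupp_eq]; exact hUint
  refine ⟨hsupp_eq, hUint, ?_, ?_⟩
  · have hfr : frontier (interior (msupport ρ)) ⊆ S \ U := by
      rw [hsupp_eq]
      intro y hy
      rw [frontier, interior_interior] at hy
      exact ⟨closure_minimal interior_subset hScl hy.1, fun hU => hy.2 (hUint' hU)⟩
    exact le_antisymm ((measure_mono hfr).trans
      (le_of_eq (volume_shell_null hσ hScl))) zero_le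
  · intro hKconn
    have hUadd : U = (fun p : EuclideanSpace ℝ (Fin d) × EuclideanSpace ℝ (Fin d) =>
        p.1 + p.2) '' (K ×ˢ ball 0 σ) := by
      ext y
      simp only [hUdef, mem_iUnion, exists_prop, mem_image, mem_prod, Prod.exists]
      constructor
      · rintro ⟨x, hx, hyx⟩
        refine ⟨x, y - x, ⟨hx, ?_⟩, by abel⟩
        rw [mem_ball, dist_zero_right, ← dist_eq_norm]
        exact mem_ball.1 hyx
      · rintro ⟨a, b, ⟨ha, hb⟩, rfl⟩
        refine ⟨a, ha, ?_⟩
        rw [mem_ball, dist_comm, dist_eq_norm]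
        simpa [mem_ball, dist_zero_right] using hb
    have hUconn : IsConnected U := by
      rw [hUadd]
      exact ((hKconn.prod ((convex_ball (0 : EuclideanSpace ℝ (Fin d)) σ).isConnected
        ⟨0, mem_ball_self hσ⟩)).image _ ((continuous_fst.add continuous_snd).continuousOn))
    rw [hsupp_eq]
    exact hUconn.subset_closure hUint' (interior_subset.trans hSclosure)
end
end

section
/- Let μ₀, μ₁, ν₀, ν₁ ∈ 𝒫₂(ℝ^d) and let S denote the entropic OT cost with cost c(x,y) = ‖x−y‖²/2 and entropic regularization parameter 1. Suppose that for each pair (μ_i, ν_j) there exist optimal EOT potentials (φ_{i,j}, ψ_{i,j}) satisfying the Schrödinger system everywhere and the pointwise bound |φ_{i,j}(x)| ∨ |ψ_{i,j}(y)| ≤ F(x) resp. F(y) for a common envelope F. Then |S(μ₁,ν₁) − S(μ₀,ν₀)| ≤ sup over functions of the form φ⊕ψ with φ,ψ bounded by F of |∫ (φ⊕ψ) d(μ₁⊗ν₁ − μ₀⊗ν₀)|. -/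
/-!
Split S(μ₁,ν₁) − S(μ₀,ν₀) through S(μ₀,ν₁). Potentials solving the Schrödinger equation in x
against ν satisfy ∫ e^{φ⊕ψ−c} d(μ⊗ν) = 1 for every probability μ (and symmetrically in y), and
for such normalized potentials the Gibbs variational principle KL(π ‖ μ⊗ν) ≥ ∫ (φ⊕ψ − c) dπ
gives the weak duality ∫ φ dμ + ∫ ψ dν ≤ S(μ,ν). Comparing with the optimal pairs,
S(μ₁,ν₁) − S(μ₀,ν₁) ≤ ∫ φ₁₁ d(μ₁ − μ₀) and S(μ₀,ν₁) − S(μ₀,ν₀) ≤ ∫ ψ₀₁ d(ν₁ − ν₀), so the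
difference is bounded by the integral of φ₁₁ ⊕ ψ₀₁ against μ₁⊗ν₁ − μ₀⊗ν₀; the reverse difference
is handled symmetrically with φ₀₀ ⊕ ψ₁₀.
-/

open MeasureTheory

noncomputable section

/-- The entropic optimal transport cost with quadratic cost ‖x−y‖²/2 and unit regularization:
infimum over couplings of transport cost plus KL divergence relative to the product measure. -/
def Sent {E : Type*} [NormedAddCommGroup E] [MeasurableSpace E] (μ ν : Measure E) : ℝ :=
  sInf {r | ∃ π : Measure (E × E),
    π.map Prod.fst = μ ∧ π.map Prod.snd = ν ∧ π ≪ μ.prod ν ∧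
    Integrable (fun z => ‖z.1 - z.2‖ ^ 2 / 2) π ∧
    Integrable (fun z => Real.log ((π.rnDeriv (μ.prod ν)) z).toReal) π ∧
    r = (∫ z, ‖z.1 - z.2‖ ^ 2 / 2 ∂π) +
      ∫ z, Real.log ((π.rnDeriv (μ.prod ν)) z).toReal ∂π}

theorem integral_le_integral_llr_of_integral_exp_eq_one {X : Type*} [MeasurableSpace X]
    {π ρ : Measure X} [IsProbabilityMeasure π] [SigmaFinite ρ] {g : X → ℝ} (hπρ : π ≪ ρ)
    (hgπ : Integrable g π) (hgρ : Integrable (fun x => Real.exp (g x)) ρ)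
    (hg : ∫ x, Real.exp (g x) ∂ρ = 1) (hllr : Integrable (llr π ρ) π) :
    ∫ x, g x ∂π ≤ ∫ x, llr π ρ x ∂π := by
  have : NeZero ρ := ⟨fun h => by simp [h] at hg⟩
  have : IsProbabilityMeasure (ρ.tilted g) := isProbabilityMeasure_tilted hgρ
  -- 0 ≤ KL(π ‖ e^g ρ) = KL(π ‖ ρ) − ∫ g dπ + log ∫ e^g dρ
  have hkl := InformationTheory.integral_llr_add_sub_measure_univ_nonneg
    (hπρ.trans (absolutelyContinuous_tilted hgρ)) (integrable_llr_tilted_right hπρ hgπ hllr hgρ)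
  rw [integral_llr_tilted_right hπρ hgπ hgρ hllr, hg, Real.log_one] at hkl
  simp only [probReal_univ] at hkl
  linarith

theorem integral_prod_eq_one_of_ae_integral_eq_one {X Y : Type*} [MeasurableSpace X]
    [MeasurableSpace Y] {μ : Measure X} {ν : Measure Y} [IsProbabilityMeasure μ] [SFinite ν]
    {f : X × Y → ℝ} (hf : AEStronglyMeasurable f (μ.prod ν)) (hf₀ : 0 ≤ f)
    (h : ∀ᵐ x ∂μ, ∫ y, f (x, y) ∂ν = 1) :
    Integrable f (μ.prod ν) ∧ ∫ z, f z ∂(μ.prod ν) = 1 := by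
  have hnorm : (fun x => ∫ y, ‖f (x, y)‖ ∂ν) =ᵐ[μ] fun _ => 1 := by
    filter_upwards [h] with x hx
    simp_rw [Real.norm_of_nonneg (hf₀ _), hx]
  have hint : Integrable f (μ.prod ν) := (integrable_prod_iff hf).2
    ⟨by filter_upwards [h] with x hx using Integrable.of_integral_ne_zero (by simp [hx]),
      (integrable_const 1).congr hnorm.symm⟩
  refine ⟨hint, ?_⟩
  rw [integral_prod f hint, integral_congr_ae h]
  simp

theorem integral_prod_eq_one_of_ae_integral_eq_one' {X Y : Type*} [MeasurableSpace X]
    [MeasurableSpace Y] {μ : Measure X} {ν : Measure Y} [SFinite μ] [IsProbabilityMeasure ν]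
    {f : X × Y → ℝ} (hf : AEStronglyMeasurable f (μ.prod ν)) (hf₀ : 0 ≤ f)
    (h : ∀ᵐ y ∂ν, ∫ x, f (x, y) ∂μ = 1) :
    Integrable f (μ.prod ν) ∧ ∫ z, f z ∂(μ.prod ν) = 1 := by
  obtain ⟨hint, hone⟩ := integral_prod_eq_one_of_ae_integral_eq_one (μ := ν) (ν := μ)
    hf.prod_swap (fun z => hf₀ z.swap) h
  exact ⟨integrable_swap_iff.1 hint, (integral_prod_swap f).symm.trans hone⟩

theorem integral_fst_add_snd_prod {X : Type*} [MeasurableSpace X] {μ ν : Measure X}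
    [IsProbabilityMeasure μ] [IsProbabilityMeasure ν] {φ ψ : X → ℝ} (hφ : Integrable φ μ)
    (hψ : Integrable ψ ν) :
    ∫ z, (φ z.1 + ψ z.2) ∂(μ.prod ν) = (∫ x, φ x ∂μ) + ∫ y, ψ y ∂ν := by
  rw [integral_add (hφ.comp_fst ν) (hψ.comp_snd μ), integral_fun_fst, integral_fun_snd]
  simp

section EntropicDuality

variable {E : Type*} [NormedAddCommGroup E] [MeasurableSpace E] [BorelSpace E]
  [SecondCountableTopology E] {μ ν : Measure E} {φ ψ : E → ℝ}

theorem integrable_norm_sub_sq_prod [IsFiniteMeasure μ] [IsFiniteMeasure ν]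
    (hμ : Integrable (fun x => ‖x‖ ^ 2) μ) (hν : Integrable (fun x => ‖x‖ ^ 2) ν) :
    Integrable (fun z : E × E => ‖z.1 - z.2‖ ^ 2 / 2) (μ.prod ν) := by
  refine ((hμ.comp_fst ν).add (hν.comp_snd μ)).mono' (by fun_prop) (ae_of_all _ fun z => ?_)
  rw [Real.norm_of_nonneg (by positivity), Pi.add_apply]
  nlinarith [norm_sub_le z.1 z.2, norm_nonneg (z.1 - z.2), sq_nonneg (‖z.1‖ - ‖z.2‖)]

structure IsEntropicDualFeasible (μ ν : Measure E) (φ ψ : E → ℝ) : Prop where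
  integrable_left : Integrable φ μ
  integrable_right : Integrable ψ ν
  integrable_exp : Integrable (fun z : E × E => Real.exp (φ z.1 + ψ z.2 - ‖z.1 - z.2‖ ^ 2 / 2))
    (μ.prod ν)
  integral_exp : ∫ z, Real.exp (φ z.1 + ψ z.2 - ‖z.1 - z.2‖ ^ 2 / 2) ∂(μ.prod ν) = 1

theorem IsEntropicDualFeasible.integral_add_integral_le_sent [IsProbabilityMeasure μ]
    [IsProbabilityMeasure ν] (h : IsEntropicDualFeasible μ ν φ ψ)
    (hμ : Integrable (fun x => ‖x‖ ^ 2) μ) (hν : Integrable (fun x => ‖x‖ ^ 2) ν) :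
    (∫ x, φ x ∂μ) + ∫ y, ψ y ∂ν ≤ Sent μ ν := by
  refine le_csInf ⟨_, μ.prod ν, by simp, by simp, .rfl, integrable_norm_sub_sq_prod hμ hν,
    (integrable_zero _ _ _).congr (llr_self _).symm, rfl⟩ ?_
  rintro r ⟨π, hπμ, hπν, hπ, hcost, hllr, rfl⟩
  have : IsProbabilityMeasure (π.map Prod.fst) := hπμ ▸ ‹_›
  have : IsProbabilityMeasure π := Measure.isProbabilityMeasure_of_map Prod.fst
  have hφπ : Integrable (fun z : E × E => φ z.1) π :=
    (hπμ ▸ h.integrable_left).comp_measurable measurable_fst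
  have hψπ : Integrable (fun z : E × E => ψ z.2) π :=
    (hπν ▸ h.integrable_right).comp_measurable measurable_snd
  have hgibbs := integral_le_integral_llr_of_integral_exp_eq_one
    (g := fun z => φ z.1 + ψ z.2 - ‖z.1 - z.2‖ ^ 2 / 2) hπ ((hφπ.add hψπ).sub hcost)
    h.integrable_exp h.integral_exp hllr
  have hmarg_left : ∫ z, φ z.1 ∂π = ∫ x, φ x ∂μ := by
    rw [← hπμ, integral_map measurable_fst.aemeasurable (hπμ ▸ h.integrable_left.1)]
  have hmarg_right : ∫ z, ψ z.2 ∂π = ∫ y, ψ y ∂ν := by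
    rw [← hπν, integral_map measurable_snd.aemeasurable (hπν ▸ h.integrable_right.1)]
  rw [integral_sub (f := fun z => φ z.1 + ψ z.2) (hφπ.add hψπ) hcost, integral_add hφπ hψπ,
    hmarg_left, hmarg_right] at hgibbs
  change _ ≤ _ + ∫ z, llr π (μ.prod ν) z ∂π
  linarith

theorem IsEntropicDualFeasible.of_integral_right [IsProbabilityMeasure μ] [IsProbabilityMeasure ν]
    (hφ : Integrable φ μ) (hψ : Integrable ψ ν)
    (h : ∀ x, ∫ y, Real.exp (φ x + ψ y - ‖x - y‖ ^ 2 / 2) ∂ν = 1) :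
    IsEntropicDualFeasible μ ν φ ψ :=
  have hexp := integral_prod_eq_one_of_ae_integral_eq_one
    (Real.continuous_exp.comp_aestronglyMeasurable
      ((hφ.1.comp_fst.add hψ.1.comp_snd).sub (by fun_prop)))
    (fun _ => (Real.exp_pos _).le) (.of_forall h)
  ⟨hφ, hψ, hexp.1, hexp.2⟩

theorem IsEntropicDualFeasible.of_integral_left [IsProbabilityMeasure μ] [IsProbabilityMeasure ν]
    (hφ : Integrable φ μ) (hψ : Integrable ψ ν)
    (h : ∀ y, ∫ x, Real.exp (φ x + ψ y - ‖x - y‖ ^ 2 / 2) ∂μ = 1) :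
    IsEntropicDualFeasible μ ν φ ψ :=
  have hexp := integral_prod_eq_one_of_ae_integral_eq_one'
    (Real.continuous_exp.comp_aestronglyMeasurable
      ((hφ.1.comp_fst.add hψ.1.comp_snd).sub (by fun_prop)))
    (fun _ => (Real.exp_pos _).le) (.of_forall h)
  ⟨hφ, hψ, hexp.1, hexp.2⟩

theorem sent_sub_sent_le {μ₀ μ₁ ν₀ ν₁ : Measure E} [IsProbabilityMeasure μ₀]
    [IsProbabilityMeasure μ₁] [IsProbabilityMeasure ν₀] [IsProbabilityMeasure ν₁]
    (hμ₀ : Integrable (fun x => ‖x‖ ^ 2) μ₀) (hν₀ : Integrable (fun x => ‖x‖ ^ 2) ν₀)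
    (hν₁ : Integrable (fun x => ‖x‖ ^ 2) ν₁) {φ' ψ' : E → ℝ}
    (hopt : Sent μ₁ ν₁ = (∫ x, φ x ∂μ₁) + ∫ y, ψ y ∂ν₁)
    (hopt' : Sent μ₀ ν₁ = (∫ x, φ' x ∂μ₀) + ∫ y, ψ' y ∂ν₁)
    (hfeas : IsEntropicDualFeasible μ₀ ν₁ φ ψ) (hfeas' : IsEntropicDualFeasible μ₀ ν₀ φ' ψ')
    (hφ : Integrable φ μ₁) (hψ' : Integrable ψ' ν₁) :
    Sent μ₁ ν₁ - Sent μ₀ ν₀ ≤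
      (∫ z, (φ z.1 + ψ' z.2) ∂(μ₁.prod ν₁)) - ∫ z, (φ z.1 + ψ' z.2) ∂(μ₀.prod ν₀) := by
  rw [integral_fst_add_snd_prod hφ hψ',
    integral_fst_add_snd_prod hfeas.integrable_left hfeas'.integrable_right]
  linarith [hfeas.integral_add_integral_le_sent hμ₀ hν₁,
    hfeas'.integral_add_integral_le_sent hμ₀ hν₀]

end EntropicDuality

section Envelope

variable {X : Type*} [MeasurableSpace X] {F : X → ℝ}

theorem abs_integral_fst_add_snd_le {μ ν : Measure X} [IsFiniteMeasure μ] [IsFiniteMeasure ν]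
    {φ ψ : X → ℝ} (hFμ : Integrable F μ) (hFν : Integrable F ν) (hφ : ∀ x, |φ x| ≤ F x)
    (hψ : ∀ y, |ψ y| ≤ F y) :
    |∫ z, (φ z.1 + ψ z.2) ∂(μ.prod ν)| ≤ ∫ z, (F z.1 + F z.2) ∂(μ.prod ν) := by
  rw [← Real.norm_eq_abs]
  exact norm_integral_le_of_norm_le ((hFμ.comp_fst ν).add (hFν.comp_snd μ))
    (.of_forall fun z => (abs_add_le _ _).trans (add_le_add (hφ _) (hψ _)))

theorem abs_integral_prod_sub_le_sSup {μ₀ μ₁ ν₀ ν₁ : Measure X} [IsFiniteMeasure μ₀]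
    [IsFiniteMeasure μ₁] [IsFiniteMeasure ν₀] [IsFiniteMeasure ν₁] (hFμ₀ : Integrable F μ₀)
    (hFμ₁ : Integrable F μ₁) (hFν₀ : Integrable F ν₀) (hFν₁ : Integrable F ν₁) {φ ψ : X → ℝ}
    (hφm : Measurable φ) (hψm : Measurable ψ) (hφ : ∀ x, |φ x| ≤ F x) (hψ : ∀ y, |ψ y| ≤ F y) :
    |(∫ z, (φ z.1 + ψ z.2) ∂(μ₁.prod ν₁)) - ∫ z, (φ z.1 + ψ z.2) ∂(μ₀.prod ν₀)| ≤
      sSup {r | ∃ φ' ψ' : X → ℝ, Measurable φ' ∧ Measurable ψ' ∧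
        (∀ x, |φ' x| ≤ F x) ∧ (∀ y, |ψ' y| ≤ F y) ∧
        r = |(∫ z, (φ' z.1 + ψ' z.2) ∂(μ₁.prod ν₁)) - ∫ z, (φ' z.1 + ψ' z.2) ∂(μ₀.prod ν₀)|} := by
  refine le_csSup ⟨(∫ z, (F z.1 + F z.2) ∂(μ₁.prod ν₁)) + ∫ z, (F z.1 + F z.2) ∂(μ₀.prod ν₀),
    ?_⟩ ⟨φ, ψ, hφm, hψm, hφ, hψ, rfl⟩
  rintro _ ⟨φ', ψ', -, -, hφ', hψ', rfl⟩
  exact (abs_sub _ _).trans (add_le_add (abs_integral_fst_add_snd_le hFμ₁ hFν₁ hφ' hψ')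
    (abs_integral_fst_add_snd_le hFμ₀ hFν₀ hφ' hψ'))

end Envelope

/-- Lipschitz-type bound for the entropic OT cost: if for each pair
(μ_i, ν_j) there are optimal EOT potentials satisfying the Schrödinger system everywhere and
bounded by a common envelope F, then |S(μ₁,ν₁) − S(μ₀,ν₀)| is bounded by the supremum of
|∫ (φ⊕ψ) d(μ₁⊗ν₁ − μ₀⊗ν₀)| over pairs of functions bounded by F. -/
theorem stmt15 {d : ℕ} (μs νs : Fin 2 → Measure (EuclideanSpace ℝ (Fin d)))
    [∀ i, IsProbabilityMeasure (μs i)] [∀ j, IsProbabilityMeasure (νs j)]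
    (hmom : ∀ i, Integrable (fun x => ‖x‖ ^ 2) (μs i) ∧ Integrable (fun x => ‖x‖ ^ 2) (νs i))
    (F : EuclideanSpace ℝ (Fin d) → ℝ)
    (hFint : ∀ i, Integrable F (μs i) ∧ Integrable F (νs i))
    (φ ψ : Fin 2 → Fin 2 → EuclideanSpace ℝ (Fin d) → ℝ)
    (hmeas : ∀ i j, Measurable (φ i j) ∧ Measurable (ψ i j))
    (hSch₁ : ∀ i j, ∀ x,
      ∫ y, Real.exp (φ i j x + ψ i j y - ‖x - y‖ ^ 2 / 2) ∂(νs j) = 1)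
    (hSch₂ : ∀ i j, ∀ y,
      ∫ x, Real.exp (φ i j x + ψ i j y - ‖x - y‖ ^ 2 / 2) ∂(μs i) = 1)
    (henv : ∀ i j, (∀ x, |φ i j x| ≤ F x) ∧ ∀ y, |ψ i j y| ≤ F y)
    (hopt : ∀ i j, Sent (μs i) (νs j) = (∫ x, φ i j x ∂(μs i)) + ∫ y, ψ i j y ∂(νs j)) :
    |Sent (μs 1) (νs 1) - Sent (μs 0) (νs 0)| ≤
      sSup {r | ∃ φ' ψ' : EuclideanSpace ℝ (Fin d) → ℝ, Measurable φ' ∧ Measurable ψ' ∧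
        (∀ x, |φ' x| ≤ F x) ∧ (∀ y, |ψ' y| ≤ F y) ∧
        r = |(∫ z, (φ' z.1 + ψ' z.2) ∂((μs 1).prod (νs 1))) -
              ∫ z, (φ' z.1 + ψ' z.2) ∂((μs 0).prod (νs 0))|} := by
  have hφ : ∀ i j k, Integrable (φ i j) (μs k) := fun i j k =>
    (hFint k).1.mono' (hmeas i j).1.aestronglyMeasurable (.of_forall (henv i j).1)
  have hψ : ∀ i j k, Integrable (ψ i j) (νs k) := fun i j k =>
    (hFint k).2.mono' (hmeas i j).2.aestronglyMeasurable (.of_forall (henv i j).2)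
  -- split through S(μ_b, ν_a)
  have hstep : ∀ a b, Sent (μs a) (νs a) - Sent (μs b) (νs b) ≤
      |(∫ z, (φ a a z.1 + ψ b a z.2) ∂((μs a).prod (νs a))) -
        ∫ z, (φ a a z.1 + ψ b a z.2) ∂((μs b).prod (νs b))| := fun a b =>
    (sent_sub_sent_le (hmom b).1 (hmom b).2 (hmom a).2 (hopt a a) (hopt b a)
      (.of_integral_right (hφ a a b) (hψ a a a) (hSch₁ a a))
      (.of_integral_left (hφ b a b) (hψ b a b) (hSch₂ b a)) (hφ a a a) (hψ b a a)).trans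
      (le_abs_self _)
  have hsup := fun {φ' ψ'} => abs_integral_prod_sub_le_sSup (φ := φ') (ψ := ψ')
    (hFint 0).1 (hFint 1).1 (hFint 0).2 (hFint 1).2
  rw [abs_sub_le_iff]
  exact ⟨(hstep 1 0).trans (hsup (hmeas 1 1).1 (hmeas 0 1).2 (henv 1 1).1 (henv 0 1).2),
    ((hstep 0 1).trans_eq (abs_sub_comm _ _)).trans
      (hsup (hmeas 0 0).1 (hmeas 1 0).2 (henv 0 0).1 (henv 1 0).2)⟩
end
end

section
/- Let S be a nonempty set, d a pseudometric on S such that (S,d) is totally bounded, and let φ: ℓ^∞(S) → ℝ be the supremum functional φ(f) = sup_{x∈S} f(x). Then φ is Hadamard directionally differentiable at every uniformly d-continuous f, with derivative φ'_f(g) = sup{g(x) : x ∈ S̄, f(x) = φ(f)} for uniformly d-continuous g, where S̄ is the completion of S with respect to d and f, g denote the unique continuous extensions to S̄. -/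
/-!
The perturbations only matter up to `tₙ · ‖gₙ - g‖∞ = o(tₙ)`, because the supremum is
1-Lipschitz for the sup-norm; and by density, suprema over `S` of `f + t g` are maxima over the
compact completion of the extensions `F + t G`. This reduces the claim to Danskin's theorem on a
compact space. Evaluating at a maximiser of `G` on the argmax set `A` of `F` gives the lower
bound; for the upper one, where `G ≥ sup_A G + ε` the function `F` stays below its maximum by a
fixed gap, which beats `t G` for small `t`.
-/

open Filter Topology Set UniformSpace

theorem TotallyBounded.compactSpace_completion {α : Type*} [UniformSpace α]
    (h : TotallyBounded (univ : Set α)) : CompactSpace (Completion α) := by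
  refine ⟨isCompact_iff_totallyBounded_isComplete.2 ⟨?_, isComplete_univ⟩⟩
  rw [← UniformSpace.Completion.denseRange_coe.closure_range, ← image_univ]
  exact (h.image (Completion.uniformContinuous_coe α)).closure

theorem DenseRange.ciSup_comp {ι X α : Type*} [TopologicalSpace X] [TopologicalSpace α]
    [ConditionallyCompleteLinearOrder α] [ClosedIicTopology α] {e : ι → X} (he : DenseRange e)
    {F : X → α} (hF : Continuous F) : ⨆ i, F (e i) = ⨆ x, F x :=
  (rangeFactorization_surjective.iSup_comp fun x : range e ↦ F x).trans (he.ciSup' hF)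

theorem abs_ciSup_sub_ciSup_le {ι : Type*} [Nonempty ι] {u v : ι → ℝ} {ε : ℝ}
    (hv : BddAbove (range v)) (h : ∀ i, |u i - v i| ≤ ε) :
    |(⨆ i, u i) - ⨆ i, v i| ≤ ε := by
  have hu : BddAbove (range u) := by
    obtain ⟨C, hC⟩ := hv
    exact ⟨C + ε, forall_mem_range.2 fun i ↦ by
      linarith [(abs_le.1 (h i)).2, hC (mem_range_self i)]⟩
  refine abs_sub_le_iff.2 ⟨sub_le_iff_le_add.2 (ciSup_le fun i ↦ ?_),
    sub_le_iff_le_add.2 (ciSup_le fun i ↦ ?_)⟩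
  · linarith [(abs_le.1 (h i)).2, le_ciSup hv i]
  · linarith [(abs_le.1 (h i)).1, le_ciSup hu i]

theorem tendsto_dist_ciSup_add_mul_sub_div {ι β : Type*} [Nonempty ι] {l : Filter β}
    {f g : ι → ℝ} {gs : β → ι → ℝ} {t : β → ℝ} (hf : BddAbove (range f))
    (hg : BddAbove (range g)) (ht : ∀ n, 0 < t n)
    (hgs : ∀ ε : ℝ, 0 < ε → ∀ᶠ n in l, ∀ i, |gs n i - g i| ≤ ε) (c : ℝ) :
    Tendsto (fun n ↦ dist (((⨆ i, f i + t n * g i) - c) / t n)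
      (((⨆ i, f i + t n * gs n i) - c) / t n)) l (𝓝 0) := by
  refine Metric.tendsto_nhds.2 fun ε hε ↦ ?_
  filter_upwards [hgs (ε / 2) (half_pos hε)] with n hn
  have hbdd : BddAbove (range fun i ↦ f i + t n * g i) := by
    obtain ⟨A, hA⟩ := hf
    obtain ⟨B, hB⟩ := hg
    exact ⟨A + t n * B, forall_mem_range.2 fun i ↦ add_le_add (hA (mem_range_self i))
      (mul_le_mul_of_nonneg_left (hB (mem_range_self i)) (ht n).le)⟩
  have hsup : |(⨆ i, f i + t n * gs n i) - ⨆ i, f i + t n * g i| ≤ t n * (ε / 2) :=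
    abs_ciSup_sub_ciSup_le hbdd fun i ↦ by
      rw [add_sub_add_left_eq_sub, ← mul_sub, abs_mul, abs_of_pos (ht n)]
      exact mul_le_mul_of_nonneg_left (hn i) (ht n).le
  rw [dist_zero_right, Real.norm_eq_abs, abs_dist, Real.dist_eq, ← sub_div,
    sub_sub_sub_cancel_right, abs_div, abs_of_pos (ht n), abs_sub_comm, div_lt_iff₀ (ht n)]
  linarith [mul_pos hε (ht n)]

theorem IsCompact.exists_forall_le_sub_of_forall_lt {X : Type*} [TopologicalSpace X]
    {K : Set X} {F : X → ℝ} {M : ℝ} (hK : IsCompact K) (hF : ContinuousOn F K)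
    (h : ∀ x ∈ K, F x < M) : ∃ δ > 0, ∀ x ∈ K, F x ≤ M - δ := by
  rcases K.eq_empty_or_nonempty with rfl | hne
  · exact ⟨1, one_pos, by simp⟩
  obtain ⟨x₀, hx₀, hmax⟩ := hK.exists_isMaxOn hne hF
  exact ⟨M - F x₀, sub_pos.2 (h x₀ hx₀), fun x hx ↦ by linarith [show F x ≤ F x₀ from hmax hx]⟩

section Danskin

variable {X : Type*} [TopologicalSpace X] [CompactSpace X] {F G : X → ℝ}

theorem exists_eq_sSup_image_argmax [Nonempty X] (hF : Continuous F) (hG : Continuous G) :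
    ∃ x, F x = ⨆ y, F y ∧ G x = sSup (G '' {x | F x = ⨆ y, F y}) := by
  have hA : IsCompact {x | F x = ⨆ y, F y} := (isClosed_eq hF continuous_const).isCompact
  obtain ⟨x₀, hx₀⟩ := (isCompact_range hF).sSup_mem (range_nonempty F)
  obtain ⟨x, hx, hGx⟩ := (hA.image hG).sSup_mem ⟨G x₀, x₀, hx₀, rfl⟩
  exact ⟨x, hx, hGx⟩

theorem le_sSup_image_argmax (hG : Continuous G) {x : X} (hx : F x = ⨆ y, F y) :
    G x ≤ sSup (G '' {x | F x = ⨆ y, F y}) :=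
  le_csSup ((isCompact_range hG).bddAbove.mono (image_subset_range _ _)) ⟨x, hx, rfl⟩

theorem ciSup_add_mul_sSup_image_argmax_le [Nonempty X] (hF : Continuous F) (hG : Continuous G)
    {t : ℝ} : (⨆ x, F x) + t * sSup (G '' {x | F x = ⨆ y, F y}) ≤ ⨆ x, F x + t * G x := by
  obtain ⟨x, hFx, hGx⟩ := exists_eq_sSup_image_argmax hF hG
  calc (⨆ x, F x) + t * sSup (G '' {x | F x = ⨆ y, F y})
      = F x + t * G x := by rw [hFx, hGx]
    _ ≤ ⨆ x, F x + t * G x :=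
      le_ciSup (isCompact_range (hF.add (continuous_const.mul hG))).bddAbove x

theorem eventually_ciSup_add_mul_le [Nonempty X] (hF : Continuous F) (hG : Continuous G) {c : ℝ}
    (hc : ∀ x, F x = ⨆ y, F y → G x < c) :
    ∀ᶠ t in 𝓝[>] 0, (⨆ x, F x + t * G x) ≤ (⨆ x, F x) + t * c := by
  have hFle : ∀ x, F x ≤ ⨆ y, F y := le_ciSup (isCompact_range hF).bddAbove
  obtain ⟨δ, hδ, hgap⟩ := (isClosed_le continuous_const hG).isCompact
    |>.exists_forall_le_sub_of_forall_lt hF.continuousOn fun x (hx : c ≤ G x) ↦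
      (hFle x).lt_of_ne fun hmax ↦ (hc x hmax).not_ge hx
  obtain ⟨C, hC⟩ := (isCompact_range hG).bddAbove
  have hsmall : ∀ᶠ t in 𝓝 (0 : ℝ), t * (C - c) < δ := by
    refine (continuous_id.mul continuous_const).continuousAt.eventually_lt continuousAt_const ?_
    simpa using hδ
  filter_upwards [self_mem_nhdsWithin, nhdsWithin_le_nhds hsmall] with t (ht : 0 < t) htδ
  refine ciSup_le fun x ↦ ?_
  rcases lt_or_ge (G x) c with hx | hx
  · nlinarith [hFle x]
  · nlinarith [hgap x hx, hC (mem_range_self x)]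

theorem tendsto_ciSup_add_mul_sub_div [Nonempty X] (hF : Continuous F) (hG : Continuous G) :
    Tendsto (fun t ↦ ((⨆ x, F x + t * G x) - ⨆ x, F x) / t) (𝓝[>] 0)
      (𝓝 (sSup (G '' {x | F x = ⨆ y, F y}))) := by
  set L := sSup (G '' {x | F x = ⨆ y, F y})
  refine tendsto_order.2 ⟨fun a ha ↦ ?_, fun b hb ↦ ?_⟩
  · filter_upwards [self_mem_nhdsWithin] with t (ht : 0 < t)
    rw [lt_div_iff₀ ht]
    nlinarith [ciSup_add_mul_sSup_image_argmax_le hF hG (t := t)]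
  · have hc : ∀ x, F x = ⨆ y, F y → G x < (L + b) / 2 := fun x hx ↦
      (le_sSup_image_argmax hG hx).trans_lt (by linarith)
    filter_upwards [self_mem_nhdsWithin, eventually_ciSup_add_mul_le hF hG hc]
      with t (ht : 0 < t) hle
    rw [div_lt_iff₀ ht]
    nlinarith

end Danskin

theorem stmt18_general {S : Type*} [PseudoMetricSpace S] [Nonempty S]
    (hS : TotallyBounded (Set.univ : Set S))
    (f g : S → ℝ) (hf : UniformContinuous f) (hg : UniformContinuous g)
    (t : ℕ → ℝ) (ht : ∀ n, 0 < t n) (ht0 : Tendsto t atTop (𝓝 0))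
    (gs : ℕ → S → ℝ)
    (hgs : ∀ ε : ℝ, 0 < ε → ∀ᶠ n in atTop, ∀ x, |gs n x - g x| ≤ ε) :
    Tendsto (fun n => ((⨆ x, (f x + t n * gs n x)) - ⨆ x, f x) / t n) atTop
      (𝓝 (sSup {r | ∃ x : UniformSpace.Completion S,
        UniformSpace.Completion.extension f x = (⨆ z, f z) ∧
        r = UniformSpace.Completion.extension g x})) := by
  have := hS.compactSpace_completion
  have : Nonempty (Completion S) := ‹Nonempty S›.map (↑)
  set F := Completion.extension f
  set G := Completion.extension g
  have hFc : Continuous F := Completion.continuous_extension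
  have hGc : Continuous G := Completion.continuous_extension
  have hfF : f = F ∘ (↑) := funext fun x ↦ (Completion.extension_coe hf x).symm
  have hgG : g = G ∘ (↑) := funext fun x ↦ (Completion.extension_coe hg x).symm
  have hsup : ∀ s : ℝ, ⨆ x, f x + s * g x = ⨆ y, F y + s * G y := fun s ↦ by
    simpa only [hfF, hgG, Function.comp_apply] using
      Completion.denseRange_coe.ciSup_comp (F := fun y ↦ F y + s * G y)
        (hFc.add (continuous_const.mul hGc))
  have hM : ⨆ x, f x = ⨆ y, F y := by simpa using hsup 0
  have hlim : {r | ∃ x, F x = ⨆ z, f z ∧ r = G x} = G '' {x | F x = ⨆ y, F y} := by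
    ext r; simp [hM, eq_comm]
  rw [hlim, hM]
  have hfb : BddAbove (range f) :=
    hfF ▸ (isCompact_range hFc).bddAbove.mono (range_comp_subset_range _ _)
  have hgb : BddAbove (range g) :=
    hgG ▸ (isCompact_range hGc).bddAbove.mono (range_comp_subset_range _ _)
  refine ((tendsto_ciSup_add_mul_sub_div hFc hGc).comp
    (tendsto_nhdsWithin_iff.2 ⟨ht0, .of_forall ht⟩)).congr_dist ?_
  simpa only [Function.comp_def, hsup] using
    tendsto_dist_ciSup_add_mul_sub_div hfb hgb ht hgs (⨆ y, F y)

/-- Hadamard directional differentiability of the supremum functional on a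
totally bounded pseudometric space: for uniformly continuous f and g and perturbations
gₙ → g uniformly, (sup(f + tₙ gₙ) − sup f)/tₙ → sup of the extension of g over the argmax set
of the extension of f on the completion. -/
theorem stmt18 {S : Type*} [PseudoMetricSpace S] [Nonempty S]
    (hS : TotallyBounded (Set.univ : Set S))
    (f g : S → ℝ) (hf : UniformContinuous f) (hg : UniformContinuous g)
    (hfb : BddAbove (Set.range f))
    (t : ℕ → ℝ) (ht : ∀ n, 0 < t n) (ht0 : Tendsto t atTop (𝓝 0))
    (gs : ℕ → S → ℝ)
    (hgs : ∀ ε : ℝ, 0 < ε → ∀ᶠ n in atTop, ∀ x, |gs n x - g x| ≤ ε) :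
    Tendsto (fun n => ((⨆ x, (f x + t n * gs n x)) - ⨆ x, f x) / t n) atTop
      (𝓝 (sSup {r | ∃ x : UniformSpace.Completion S,
        UniformSpace.Completion.extension f x = (⨆ z, f z) ∧
        r = UniformSpace.Completion.extension g x})) :=
  stmt18_general hS f g hf hg t ht ht0 gs hgs
end
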